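/- arXiv:1901.02743 — 6 statements merged into one kernel-verified Lean document; each statement's English description precedes it below -/
import Mathlib

section
/- The map τ_R sending T ↦ T, X ↦ X, Y ↦ q^{1/2}·X·Y extends to an algebra automorphism of the A₁-type double affine Hecke algebra H_{q,t}; i.e., the images of T, X, Y satisfy the same defining relations. -/
/-- The map `τ_R : T ↦ T, X ↦ X, Y ↦ q^{1/2}·X·Y` extends to an algebra automorphism of the
`A₁`-type DAHA `H_{q,t}`: the images of `T, X, Y` (with `v = q^{1/2}`) are invertible and
satisfy the same defining relations. -/
theorem daha_A1_tauR {A : Type*} [Ring A] [Algebra ℂ A]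
    (q v t : ℂ) (hv : v ^ 2 = q) (hv0 : v ≠ 0) (ht0 : t ≠ 0)
    (T X Y : Aˣ)
    (hT : ((T : A) + algebraMap ℂ A t) * ((T : A) - algebraMap ℂ A t⁻¹) = 0)
    (hX : (T : A) * (X : A) * (T : A) = ((X⁻¹ : Aˣ) : A))
    (hY : ((T⁻¹ : Aˣ) : A) * (Y : A) * ((T⁻¹ : Aˣ) : A) = ((Y⁻¹ : Aˣ) : A))
    (hXY : (X : A) * (Y : A) = q⁻¹ • ((Y : A) * (X : A) * (T : A) ^ 2)) :
    let Y' : A := v • ((X : A) * (Y : A))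
    let Y'i : A := v⁻¹ • (((Y⁻¹ : Aˣ) : A) * ((X⁻¹ : Aˣ) : A))
    Y' * Y'i = 1 ∧ Y'i * Y' = 1 ∧
      ((T : A) + algebraMap ℂ A t) * ((T : A) - algebraMap ℂ A t⁻¹) = 0 ∧
      (T : A) * (X : A) * (T : A) = ((X⁻¹ : Aˣ) : A) ∧
      ((T⁻¹ : Aˣ) : A) * Y' * ((T⁻¹ : Aˣ) : A) = Y'i ∧
      (X : A) * Y' = q⁻¹ • (Y' * (X : A) * (T : A) ^ 2) := by
  intro Y' Y'i
  have hq0 : q ≠ 0 := by rw [← hv]; exact pow_ne_zero _ hv0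
  -- the unit Y*X*T^2 and the rearranged commutation relation
  have hXY' : ((Y : A) * (X : A) * (T : A) ^ 2) = q • ((X : A) * (Y : A)) := by
    rw [hXY, smul_smul, mul_inv_cancel₀ hq0, one_smul]
  refine ⟨?_, ?_, hT, hX, ?_, ?_⟩
  · show (v • ((X : A) * (Y : A))) * (v⁻¹ • (((Y⁻¹ : Aˣ) : A) * ((X⁻¹ : Aˣ) : A))) = 1
    rw [smul_mul_assoc, mul_smul_comm, smul_smul, mul_inv_cancel₀ hv0, one_smul,
      mul_assoc, ← mul_assoc (Y : A), Units.mul_inv, one_mul, Units.mul_inv]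
  · show (v⁻¹ • (((Y⁻¹ : Aˣ) : A) * ((X⁻¹ : Aˣ) : A))) * (v • ((X : A) * (Y : A))) = 1
    rw [smul_mul_assoc, mul_smul_comm, smul_smul, inv_mul_cancel₀ hv0, one_smul,
      mul_assoc, ← mul_assoc ((X⁻¹ : Aˣ) : A), Units.inv_mul, one_mul, Units.inv_mul]
  · show ((T⁻¹ : Aˣ) : A) * (v • ((X : A) * (Y : A))) * ((T⁻¹ : Aˣ) : A)
      = v⁻¹ • (((Y⁻¹ : Aˣ) : A) * ((X⁻¹ : Aˣ) : A))
    -- Y * T⁻¹ = T * Y⁻¹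
    have h1 : (Y : A) * ((T⁻¹ : Aˣ) : A) = (T : A) * ((Y⁻¹ : Aˣ) : A) := by
      have := congrArg (fun z => (T : A) * z) hY
      simpa [mul_assoc, Units.mul_inv_cancel_left] using this
    -- T⁻¹ * X = T⁻¹ * T⁻¹ * X⁻¹ * T⁻¹
    have h2 : ((T⁻¹ : Aˣ) : A) * (((X⁻¹ : Aˣ) : A) * ((T⁻¹ : Aˣ) : A)) = (X : A) := by
      have := congrArg (fun z => ((T⁻¹ : Aˣ) : A) * z * ((T⁻¹ : Aˣ) : A)) hX
      simpa [mul_assoc, Units.inv_mul_cancel_left, Units.mul_inv_cancel_left] using this.symm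
    -- key: Y⁻¹ * X⁻¹ = q • (T⁻¹^2 * X⁻¹ * Y⁻¹)
    have key : ((Y⁻¹ : Aˣ) : A) * ((X⁻¹ : Aˣ) : A)
        = q • (((T⁻¹ : Aˣ) : A) * ((T⁻¹ : Aˣ) : A) * ((X⁻¹ : Aˣ) : A) * ((Y⁻¹ : Aˣ) : A)) := by
      have hc : ((Y : A) * (X : A) * (T : A) ^ 2) * (((Y⁻¹ : Aˣ) : A) * ((X⁻¹ : Aˣ) : A))
          = q • (1 : A) := by
        rw [hXY', smul_mul_assoc]
        congr 1
        rw [mul_assoc, ← mul_assoc (Y : A), Units.mul_inv, one_mul, Units.mul_inv]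
      have hc2 : ((Y : A) * (X : A) * (T : A) ^ 2) *
          (q • (((T⁻¹ : Aˣ) : A) * ((T⁻¹ : Aˣ) : A) * ((X⁻¹ : Aˣ) : A) * ((Y⁻¹ : Aˣ) : A)))
          = q • (1 : A) := by
        rw [mul_smul_comm]
        congr 1
        simp [sq, mul_assoc, Units.mul_inv_cancel_left, Units.mul_inv]
      have hu : IsUnit ((Y : A) * (X : A) * (T : A) ^ 2) :=
        (Y.isUnit.mul X.isUnit).mul (T.isUnit.pow 2)
      exact hu.mul_left_cancel (hc.trans hc2.symm)
    calc ((T⁻¹ : Aˣ) : A) * (v • ((X : A) * (Y : A))) * ((T⁻¹ : Aˣ) : A)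
        = v • (((T⁻¹ : Aˣ) : A) * (X : A) * ((Y : A) * ((T⁻¹ : Aˣ) : A))) := by
          rw [mul_smul_comm, smul_mul_assoc]
          congr 1
          simp [mul_assoc]
      _ = v • (((T⁻¹ : Aˣ) : A) * (X : A) * ((T : A) * ((Y⁻¹ : Aˣ) : A))) := by rw [h1]
      _ = v • (((T⁻¹ : Aˣ) : A) * ((T⁻¹ : Aˣ) : A) * ((X⁻¹ : Aˣ) : A) * ((Y⁻¹ : Aˣ) : A)) := by
          congr 1
          conv_lhs => rw [← h2]
          simp [mul_assoc, Units.inv_mul_cancel_left]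
      _ = v⁻¹ • (((Y⁻¹ : Aˣ) : A) * ((X⁻¹ : Aˣ) : A)) := by
          rw [key, smul_smul]
          congr 1
          rw [← hv]
          field_simp
  · show (X : A) * (v • ((X : A) * (Y : A)))
      = q⁻¹ • ((v • ((X : A) * (Y : A))) * (X : A) * (T : A) ^ 2)
    rw [mul_smul_comm, smul_mul_assoc, smul_mul_assoc, smul_comm]
    congr 1
    conv_lhs => rw [hXY]
    rw [mul_smul_comm]
    congr 1
    simp [mul_assoc]
end

section
/- The map τ_L sending T ↦ T, Y ↦ Y, X ↦ q^{−1/2}·Y·X extends to an algebra automorphism of the A₁-type double affine Hecke algebra H_{q,t}. -/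
/-- The map `τ_L : T ↦ T, Y ↦ Y, X ↦ q^{−1/2}·Y·X` extends to an algebra automorphism of the
`A₁`-type DAHA `H_{q,t}`: the images of `T, X, Y` (with `v = q^{1/2}`) are invertible and
satisfy the same defining relations. -/
theorem daha_A1_tauL {A : Type*} [Ring A] [Algebra ℂ A]
    (q v t : ℂ) (hv : v ^ 2 = q) (hv0 : v ≠ 0) (ht0 : t ≠ 0)
    (T X Y : Aˣ)
    (hT : ((T : A) + algebraMap ℂ A t) * ((T : A) - algebraMap ℂ A t⁻¹) = 0)
    (hX : (T : A) * (X : A) * (T : A) = ((X⁻¹ : Aˣ) : A))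
    (hY : ((T⁻¹ : Aˣ) : A) * (Y : A) * ((T⁻¹ : Aˣ) : A) = ((Y⁻¹ : Aˣ) : A))
    (hXY : (X : A) * (Y : A) = q⁻¹ • ((Y : A) * (X : A) * (T : A) ^ 2)) :
    let X' : A := v⁻¹ • ((Y : A) * (X : A))
    let X'i : A := v • (((X⁻¹ : Aˣ) : A) * ((Y⁻¹ : Aˣ) : A))
    X' * X'i = 1 ∧ X'i * X' = 1 ∧
      ((T : A) + algebraMap ℂ A t) * ((T : A) - algebraMap ℂ A t⁻¹) = 0 ∧
      (T : A) * X' * (T : A) = X'i ∧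
      ((T⁻¹ : Aˣ) : A) * (Y : A) * ((T⁻¹ : Aˣ) : A) = ((Y⁻¹ : Aˣ) : A) ∧
      X' * (Y : A) = q⁻¹ • ((Y : A) * X' * (T : A) ^ 2) := by
  intro X' X'i
  have hq0 : q ≠ 0 := by rw [← hv]; exact pow_ne_zero 2 hv0
  have hqq : q⁻¹ * q = 1 := inv_mul_cancel₀ hq0
  have hvv : v⁻¹ * v = 1 := inv_mul_cancel₀ hv0
  -- Y = T * Y⁻¹ * T
  have hYY : (Y : A) = (T : A) * ((Y⁻¹ : Aˣ) : A) * (T : A) := by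
    have h := congrArg (fun z => (T : A) * z * (T : A)) hY
    simp only [mul_assoc] at h ⊢
    rw [← h]
    simp [Units.mul_inv_cancel_left, Units.inv_mul_cancel_right, ← mul_assoc]
  -- (X*Y) * (q • (T⁻¹*T⁻¹*X⁻¹*Y⁻¹)) = 1
  have h1 : ((X : A) * (Y : A)) *
      (q • (((T⁻¹ : Aˣ) : A) * ((T⁻¹ : Aˣ) : A) * ((X⁻¹ : Aˣ) : A) * ((Y⁻¹ : Aˣ) : A))) = 1 := by
    rw [hXY, smul_mul_assoc, mul_smul_comm, smul_smul, hqq, one_smul, sq]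
    simp [mul_assoc, Units.mul_inv_cancel_left, Units.inv_mul_cancel_left]
  -- Y⁻¹ * X⁻¹ = q • (T⁻¹*T⁻¹*X⁻¹*Y⁻¹)
  have h2 : ((Y⁻¹ : Aˣ) : A) * ((X⁻¹ : Aˣ) : A) =
      q • (((T⁻¹ : Aˣ) : A) * ((T⁻¹ : Aˣ) : A) * ((X⁻¹ : Aˣ) : A) * ((Y⁻¹ : Aˣ) : A)) := by
    calc ((Y⁻¹ : Aˣ) : A) * ((X⁻¹ : Aˣ) : A)
        = ((Y⁻¹ : Aˣ) : A) * ((X⁻¹ : Aˣ) : A) * (((X : A) * (Y : A)) *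
          (q • (((T⁻¹ : Aˣ) : A) * ((T⁻¹ : Aˣ) : A) * ((X⁻¹ : Aˣ) : A) * ((Y⁻¹ : Aˣ) : A)))) := by
          rw [h1, mul_one]
      _ = q • (((T⁻¹ : Aˣ) : A) * ((T⁻¹ : Aˣ) : A) * ((X⁻¹ : Aˣ) : A) * ((Y⁻¹ : Aˣ) : A)) := by
          simp [mul_assoc, Units.inv_mul_cancel_left]
  -- key: T * Y * X * T = q • (X⁻¹ * Y⁻¹)
  have hkey : (T : A) * (Y : A) * (X : A) * (T : A) =
      q • (((X⁻¹ : Aˣ) : A) * ((Y⁻¹ : Aˣ) : A)) := by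
    conv_lhs => rw [hYY]
    calc (T : A) * ((T : A) * ((Y⁻¹ : Aˣ) : A) * (T : A)) * (X : A) * (T : A)
        = (T : A) * (T : A) * ((Y⁻¹ : Aˣ) : A) * ((T : A) * (X : A) * (T : A)) := by
          simp [mul_assoc]
      _ = (T : A) * (T : A) * (((Y⁻¹ : Aˣ) : A) * ((X⁻¹ : Aˣ) : A)) := by
          rw [hX, mul_assoc]
      _ = q • (((X⁻¹ : Aˣ) : A) * ((Y⁻¹ : Aˣ) : A)) := by
          rw [h2, mul_smul_comm]
          simp [mul_assoc, Units.mul_inv_cancel_left]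
  refine ⟨?_, ?_, hT, ?_, hY, ?_⟩
  · show (v⁻¹ • ((Y : A) * (X : A))) * (v • (((X⁻¹ : Aˣ) : A) * ((Y⁻¹ : Aˣ) : A))) = 1
    rw [smul_mul_assoc, mul_smul_comm, smul_smul, hvv, one_smul]
    simp [mul_assoc, Units.mul_inv_cancel_left]
  · show (v • (((X⁻¹ : Aˣ) : A) * ((Y⁻¹ : Aˣ) : A))) * (v⁻¹ • ((Y : A) * (X : A))) = 1
    rw [smul_mul_assoc, mul_smul_comm, smul_smul, mul_comm v, hvv, one_smul]
    simp [mul_assoc, Units.inv_mul_cancel_left]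
  · show (T : A) * (v⁻¹ • ((Y : A) * (X : A))) * (T : A)
      = v • (((X⁻¹ : Aˣ) : A) * ((Y⁻¹ : Aˣ) : A))
    rw [mul_smul_comm, smul_mul_assoc, show (T:A) * ((Y:A) * (X:A)) * (T:A) = (T:A) * (Y:A) * (X:A) * (T:A) by simp [mul_assoc], hkey, smul_smul]
    congr 1
    rw [← hv]; field_simp
  · show (v⁻¹ • ((Y : A) * (X : A))) * (Y : A)
      = q⁻¹ • ((Y : A) * (v⁻¹ • ((Y : A) * (X : A))) * (T : A) ^ 2)
    rw [smul_mul_assoc, mul_assoc, hXY, mul_smul_comm, mul_smul_comm, smul_mul_assoc,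
      smul_smul, smul_smul, mul_comm q⁻¹ v⁻¹]
    congr 1
    simp [mul_assoc]
end

section
/- The map ε sending X ↦ Y, Y ↦ X, T ↦ T⁻¹ defines an algebra isomorphism from H_{q,t} to H_{q⁻¹,t⁻¹}, i.e., the images satisfy the defining relations of H_{q⁻¹,t⁻¹}. -/
/-- The map `ε : X ↦ Y, Y ↦ X, T ↦ T⁻¹` defines an algebra isomorphism
`H_{q,t} → H_{q⁻¹,t⁻¹}`: the images `T' = T⁻¹, X' = Y, Y' = X` satisfy the defining relations
of `H_{q⁻¹,t⁻¹}`. -/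
theorem daha_A1_epsilon {A : Type*} [Ring A] [Algebra ℂ A]
    (q t : ℂ) (hq0 : q ≠ 0) (ht0 : t ≠ 0)
    (T X Y : Aˣ)
    (hT : ((T : A) + algebraMap ℂ A t) * ((T : A) - algebraMap ℂ A t⁻¹) = 0)
    (hX : (T : A) * (X : A) * (T : A) = ((X⁻¹ : Aˣ) : A))
    (hY : ((T⁻¹ : Aˣ) : A) * (Y : A) * ((T⁻¹ : Aˣ) : A) = ((Y⁻¹ : Aˣ) : A))
    (hXY : (X : A) * (Y : A) = q⁻¹ • ((Y : A) * (X : A) * (T : A) ^ 2)) :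
    (((T⁻¹ : Aˣ) : A) + algebraMap ℂ A t⁻¹) * (((T⁻¹ : Aˣ) : A) - algebraMap ℂ A (t⁻¹)⁻¹) = 0 ∧
      ((T⁻¹ : Aˣ) : A) * (Y : A) * ((T⁻¹ : Aˣ) : A) = ((Y⁻¹ : Aˣ) : A) ∧
      (((T⁻¹)⁻¹ : Aˣ) : A) * (X : A) * (((T⁻¹)⁻¹ : Aˣ) : A) = ((X⁻¹ : Aˣ) : A) ∧
      (Y : A) * (X : A) = (q⁻¹)⁻¹ • ((X : A) * (Y : A) * ((T⁻¹ : Aˣ) : A) ^ 2) := by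
  set c := algebraMap ℂ A with hc
  set u := (T : A) with hu
  set v := ((T⁻¹ : Aˣ) : A) with hv
  have hvu : v * u = 1 := Units.inv_mul T
  have huv : u * v = 1 := Units.mul_inv T
  have hct : c t * c t⁻¹ = 1 := by rw [← map_mul, mul_inv_cancel₀ ht0, map_one]
  have hct' : c t⁻¹ * c t = 1 := by rw [← map_mul, inv_mul_cancel₀ ht0, map_one]
  refine ⟨?_, hY, by rw [inv_inv]; exact hX, ?_⟩
  · rw [inv_inv]
    have key : v * ((u + c t) * (u - c t⁻¹)) * v = 0 := by rw [hT, mul_zero, zero_mul]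
    have h3 : c t * v * (c t⁻¹ * v) = v * v := by
      rw [mul_assoc, ← mul_assoc v (c t⁻¹) v, ← Algebra.commutes t⁻¹ v, ← mul_assoc,
        ← mul_assoc, hct, one_mul]
    have expand : v * ((u + c t) * (u - c t⁻¹)) * v
        = 1 + c t * v - c t⁻¹ * v - v * v := by
      have h1 : v * (u + c t) = 1 + c t * v := by
        rw [mul_add, hvu, Algebra.commutes]
      have h2 : (u - c t⁻¹) * v = 1 - c t⁻¹ * v := by
        rw [sub_mul, huv]
      calc v * ((u + c t) * (u - c t⁻¹)) * v
          = (v * (u + c t)) * ((u - c t⁻¹) * v) := by noncomm_ring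
        _ = (1 + c t * v) * (1 - c t⁻¹ * v) := by rw [h1, h2]
        _ = 1 + c t * v - c t⁻¹ * v - (c t * v) * (c t⁻¹ * v) := by noncomm_ring
        _ = 1 + c t * v - c t⁻¹ * v - v * v := by rw [h3]
    rw [expand] at key
    have lhs : (v + c t⁻¹) * (v - c t) = -(1 + c t * v - c t⁻¹ * v - v * v) := by
      rw [add_mul, mul_sub, mul_sub, hct', ← Algebra.commutes t v]
      abel
    rw [lhs, key, neg_zero]
  · rw [inv_inv]
    have huv2 : u ^ 2 * v ^ 2 = 1 := by
      have : u ^ 2 * v ^ 2 = u * (u * v) * v := by noncomm_ring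
      rw [this, huv, mul_one, huv]
    rw [hXY, smul_mul_assoc, mul_assoc, huv2, mul_one, smul_smul, mul_inv_cancel₀ hq0,
      one_smul]
end

section
/- The A₁-type Macdonald polynomials satisfy the three-term recurrence: (x + x⁻¹)·M_n(x; q, t) = M_{n+1}(x; q, t) + ((1 − q^{2n})(1 − q^{2n−2} t⁴))/((1 − q^{2n−2} t²)(1 − q^{2n} t²)) · M_{n−1}(x; q, t) for n ≥ 1. -/
/-- The finite q-Pochhammer symbol `(a;q)_n = ∏_{j=0}^{n-1} (1 − a q^j)`. -/
noncomputable def qPoch (a q : ℂ) (n : ℕ) : ℂ := ∏ j ∈ Finset.range n, (1 - a * q ^ j)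

/-- The `A₁`-type Macdonald polynomial. -/
noncomputable def macdonaldA1 (n : ℕ) (x q t : ℂ) : ℂ :=
  qPoch (q ^ 2) (q ^ 2) n / qPoch (t ^ 2) (q ^ 2) n *
    ∑ j ∈ Finset.range (n + 1),
      qPoch (t ^ 2) (q ^ 2) j * qPoch (t ^ 2) (q ^ 2) (n - j) /
          (qPoch (q ^ 2) (q ^ 2) j * qPoch (q ^ 2) (q ^ 2) (n - j)) *
        x ^ ((j : ℤ) - ((n : ℤ) - (j : ℤ)))

/-!
Write `M_n = ∑_{j+k=n} c_{j,k} x^{j-k}` with `c_{j,k} = w_j w_k / w_{j+k}` and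
`w_m = (t²;q²)_m / (q²;q²)_m`. Multiplying by `x + x⁻¹` shifts the antidiagonal `j + k = n` to
`j + k = n ± 1`; the extreme coefficients are `1` on both sides, and the recurrence reduces to
`c_{j,k+1} + c_{j+1,k} = c_{j+1,k+1} + λ_{j+k+1} c_{j,k}`, `λ_n` being the coefficient of
`M_{n-1}`. Since `w_{m+1} = w_m ρ_m` with `ρ_m = (1 - t² q^{2m}) / (1 - q^{2m+2})`, dividing by
`c_{j,k}` turns this into the rational identity
`ρ_j + ρ_k = ρ_j ρ_k / ρ_{j+k+1} + (1 - t⁴ q^{2(j+k)}) / (1 - t² q^{2(j+k+1)})`.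
-/

open Finset

section Field

variable {K : Type*} [Field K]

theorem mul_add_inv_sum_antidiagonal_succ {x : K} (hx : x ≠ 0) (f : ℕ → ℕ → K) (n : ℕ) :
    (x + x⁻¹) * ∑ p ∈ antidiagonal (n + 1), f p.1 p.2 * x ^ ((p.1 : ℤ) - p.2) =
      f (n + 1) 0 * x ^ ((n : ℤ) + 2) + f 0 (n + 1) * x ^ (-(n : ℤ) - 2) +
        ∑ p ∈ antidiagonal n, (f p.1 (p.2 + 1) + f (p.1 + 1) p.2) * x ^ ((p.1 : ℤ) - p.2) := by
  have shift (e : ℤ) : (x + x⁻¹) * x ^ e = x ^ (e + 1) + x ^ (e - 1) := by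
    rw [zpow_add_one₀ hx, zpow_sub_one₀ hx]; ring
  calc (x + x⁻¹) * ∑ p ∈ antidiagonal (n + 1), f p.1 p.2 * x ^ ((p.1 : ℤ) - p.2)
      = ∑ p ∈ antidiagonal (n + 1), f p.1 p.2 * x ^ ((p.1 : ℤ) - p.2 + 1) +
          ∑ p ∈ antidiagonal (n + 1), f p.1 p.2 * x ^ ((p.1 : ℤ) - p.2 - 1) := by
        simp only [mul_sum, ← sum_add_distrib, mul_left_comm (x + x⁻¹), shift, mul_add]
    _ = _ := by
        rw [Nat.sum_antidiagonal_succ', Nat.sum_antidiagonal_succ]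
        push_cast
        simp only [add_mul, sum_add_distrib]
        ring_nf

theorem sum_antidiagonal_add_two_zpow (x : K) (f : ℕ → ℕ → K) (n : ℕ) :
    ∑ p ∈ antidiagonal (n + 2), f p.1 p.2 * x ^ ((p.1 : ℤ) - p.2) =
      f (n + 2) 0 * x ^ ((n : ℤ) + 2) + f 0 (n + 2) * x ^ (-(n : ℤ) - 2) +
        ∑ p ∈ antidiagonal n, f (p.1 + 1) (p.2 + 1) * x ^ ((p.1 : ℤ) - p.2) := by
  rw [Nat.sum_antidiagonal_succ, Nat.sum_antidiagonal_succ']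
  push_cast
  ring_nf

theorem one_sub_div_one_sub_add_one_sub_div_one_sub {u s A B : K} (hA : 1 - u * A ≠ 0)
    (hB : 1 - u * B ≠ 0) (hAB : 1 - s * (u * (A * B)) ≠ 0) :
    (1 - s * A) / (1 - u * A) + (1 - s * B) / (1 - u * B) =
      (1 - s * A) / (1 - u * A) * ((1 - s * B) / (1 - u * B)) /
          ((1 - s * (u * (A * B))) / (1 - u * (u * (A * B)))) +
        (1 - s ^ 2 * (A * B)) / (1 - s * (u * (A * B))) := by
  have hD := mul_ne_zero hA hB
  rw [div_div_eq_mul_div, ← add_div, eq_div_iff hAB, div_add_div _ _ hA hB, div_mul_div_comm,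
    div_mul_eq_mul_div _ _ (1 - s * (u * (A * B))), div_mul_eq_mul_div _ _ (1 - u * (u * (A * B))),
    div_add' _ _ _ hD, div_left_inj' hD]
  ring

end Field

theorem qPoch_zero (a q : ℂ) : qPoch a q 0 = 1 := prod_range_zero _

theorem qPoch_succ (a q : ℂ) (n : ℕ) : qPoch a q (n + 1) = qPoch a q n * (1 - a * q ^ n) :=
  prod_range_succ _ _

theorem one_sub_mul_pow_ne_zero_of_qPoch_succ_ne_zero {a q : ℂ} {n : ℕ}
    (h : qPoch a q (n + 1) ≠ 0) : 1 - a * q ^ n ≠ 0 := by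
  rw [qPoch_succ] at h
  exact right_ne_zero_of_mul h

noncomputable def macdonaldWeight (q t : ℂ) (n : ℕ) : ℂ :=
  qPoch (t ^ 2) (q ^ 2) n / qPoch (q ^ 2) (q ^ 2) n

noncomputable def macdonaldRatio (q t : ℂ) (n : ℕ) : ℂ :=
  (1 - t ^ 2 * (q ^ 2) ^ n) / (1 - q ^ 2 * (q ^ 2) ^ n)

noncomputable def macdonaldCoeff (q t : ℂ) (j k : ℕ) : ℂ :=
  macdonaldWeight q t j * macdonaldWeight q t k / macdonaldWeight q t (j + k)

theorem macdonaldWeight_zero (q t : ℂ) : macdonaldWeight q t 0 = 1 := by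
  simp [macdonaldWeight, qPoch_zero]

theorem macdonaldWeight_succ (q t : ℂ) (n : ℕ) :
    macdonaldWeight q t (n + 1) = macdonaldWeight q t n * macdonaldRatio q t n := by
  simp only [macdonaldWeight, macdonaldRatio, qPoch_succ, mul_div_mul_comm]

theorem macdonaldCoeff_zero_left {q t : ℂ} {n : ℕ} (hw : macdonaldWeight q t n ≠ 0) :
    macdonaldCoeff q t 0 n = 1 := by
  rw [macdonaldCoeff, macdonaldWeight_zero, zero_add, one_mul, div_self hw]

theorem macdonaldCoeff_zero_right {q t : ℂ} {n : ℕ} (hw : macdonaldWeight q t n ≠ 0) :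
    macdonaldCoeff q t n 0 = 1 := by
  rw [macdonaldCoeff, macdonaldWeight_zero, add_zero, mul_one, div_self hw]

theorem macdonaldCoeff_succ_right (q t : ℂ) (j k : ℕ) :
    macdonaldCoeff q t j (k + 1) =
      macdonaldCoeff q t j k * (macdonaldRatio q t k / macdonaldRatio q t (j + k)) := by
  simp only [macdonaldCoeff, ← add_assoc, macdonaldWeight_succ]
  ring

theorem macdonaldCoeff_succ_left (q t : ℂ) (j k : ℕ) :
    macdonaldCoeff q t (j + 1) k =
      macdonaldCoeff q t j k * (macdonaldRatio q t j / macdonaldRatio q t (j + k)) := by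
  simp only [macdonaldCoeff, add_right_comm j 1 k, macdonaldWeight_succ]
  ring

theorem macdonaldCoeff_succ_succ (q t : ℂ) (j k : ℕ) :
    macdonaldCoeff q t (j + 1) (k + 1) =
      macdonaldCoeff q t j k * (macdonaldRatio q t j * macdonaldRatio q t k /
        (macdonaldRatio q t (j + k) * macdonaldRatio q t (j + k + 1))) := by
  rw [macdonaldCoeff_succ_right, macdonaldCoeff_succ_left, add_right_comm j 1 k]
  ring

theorem macdonaldRatio_add_macdonaldRatio {q t : ℂ} (hqp : ∀ m : ℕ, qPoch (q ^ 2) (q ^ 2) m ≠ 0)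
    (htp : ∀ m : ℕ, qPoch (t ^ 2) (q ^ 2) m ≠ 0) (j k : ℕ) :
    macdonaldRatio q t j + macdonaldRatio q t k =
      macdonaldRatio q t j * macdonaldRatio q t k / macdonaldRatio q t (j + k + 1) +
        (1 - (t ^ 2) ^ 2 * (q ^ 2) ^ (j + k)) / (1 - t ^ 2 * (q ^ 2) ^ (j + k + 1)) := by
  have hpow : (q ^ 2) ^ (j + k + 1) = q ^ 2 * ((q ^ 2) ^ j * (q ^ 2) ^ k) := by ring
  simp only [macdonaldRatio, hpow, pow_add]
  refine one_sub_div_one_sub_add_one_sub_div_one_sub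
    (one_sub_mul_pow_ne_zero_of_qPoch_succ_ne_zero (hqp _))
    (one_sub_mul_pow_ne_zero_of_qPoch_succ_ne_zero (hqp _)) ?_
  rw [← hpow]
  exact one_sub_mul_pow_ne_zero_of_qPoch_succ_ne_zero (htp _)

theorem macdonaldCoeff_three_term {q t : ℂ} (hqp : ∀ m : ℕ, qPoch (q ^ 2) (q ^ 2) m ≠ 0)
    (htp : ∀ m : ℕ, qPoch (t ^ 2) (q ^ 2) m ≠ 0) (j k : ℕ) :
    macdonaldCoeff q t j (k + 1) + macdonaldCoeff q t (j + 1) k =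
      macdonaldCoeff q t (j + 1) (k + 1) +
        (1 - q ^ (2 * (j + k + 1))) * (1 - q ^ (2 * (j + k + 1) - 2) * t ^ 4) /
            ((1 - q ^ (2 * (j + k + 1) - 2) * t ^ 2) * (1 - q ^ (2 * (j + k + 1)) * t ^ 2)) *
          macdonaldCoeff q t j k := by
  have hfactor : (1 - q ^ (2 * (j + k + 1))) * (1 - q ^ (2 * (j + k + 1) - 2) * t ^ 4) /
        ((1 - q ^ (2 * (j + k + 1) - 2) * t ^ 2) * (1 - q ^ (2 * (j + k + 1)) * t ^ 2)) =
      (1 - (t ^ 2) ^ 2 * (q ^ 2) ^ (j + k)) / (1 - t ^ 2 * (q ^ 2) ^ (j + k + 1)) /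
        macdonaldRatio q t (j + k) := by
    rw [show 2 * (j + k + 1) - 2 = 2 * (j + k) by omega, macdonaldRatio, div_div_eq_mul_div,
      div_mul_eq_mul_div, div_div, pow_mul, pow_mul]
    ring
  rw [hfactor, macdonaldCoeff_succ_right, macdonaldCoeff_succ_left, macdonaldCoeff_succ_succ]
  linear_combination macdonaldCoeff q t j k / macdonaldRatio q t (j + k) *
    macdonaldRatio_add_macdonaldRatio hqp htp j k

theorem macdonaldA1_eq_sum_antidiagonal (n : ℕ) (x q t : ℂ) :
    macdonaldA1 n x q t =
      ∑ p ∈ antidiagonal n, macdonaldCoeff q t p.1 p.2 * x ^ ((p.1 : ℤ) - p.2) := by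
  rw [Nat.sum_antidiagonal_eq_sum_range_succ_mk, macdonaldA1, mul_sum]
  refine sum_congr rfl fun j hj => ?_
  have hjn : j ≤ n := Nat.lt_succ_iff.mp (mem_range.mp hj)
  rw [macdonaldCoeff, Nat.add_sub_cancel' hjn, Nat.cast_sub hjn]
  simp only [macdonaldWeight, div_div_eq_mul_div]
  ring

theorem macdonaldA1_three_term_general (n : ℕ) (hn : 1 ≤ n) (x q t : ℂ) (hx0 : x ≠ 0)
    (hqp : ∀ m : ℕ, qPoch (q ^ 2) (q ^ 2) m ≠ 0)
    (htp : ∀ m : ℕ, qPoch (t ^ 2) (q ^ 2) m ≠ 0) :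
    (x + x⁻¹) * macdonaldA1 n x q t =
      macdonaldA1 (n + 1) x q t +
        (1 - q ^ (2 * n)) * (1 - q ^ (2 * n - 2) * t ^ 4) /
            ((1 - q ^ (2 * n - 2) * t ^ 2) * (1 - q ^ (2 * n) * t ^ 2)) *
          macdonaldA1 (n - 1) x q t := by
  obtain ⟨l, rfl⟩ := Nat.exists_eq_add_of_le' hn
  have hw (m : ℕ) : macdonaldWeight q t m ≠ 0 := div_ne_zero (htp m) (hqp m)
  simp only [macdonaldA1_eq_sum_antidiagonal, Nat.add_sub_cancel,
    mul_add_inv_sum_antidiagonal_succ hx0, sum_antidiagonal_add_two_zpow,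
    macdonaldCoeff_zero_left (hw _), macdonaldCoeff_zero_right (hw _)]
  rw [mul_sum, add_assoc _ (∑ p ∈ antidiagonal l, _), ← sum_add_distrib]
  congr 1
  refine sum_congr rfl fun p hp => ?_
  rw [← mem_antidiagonal.mp hp, macdonaldCoeff_three_term hqp htp]
  ring

/-- Three-term recurrence for the `A₁`-type Macdonald polynomials, `n ≥ 1`, generic `q, t`:
`(x + x⁻¹)·M_n = M_{n+1} + ((1 − q^{2n})(1 − q^{2n−2}t⁴))/((1 − q^{2n−2}t²)(1 − q^{2n}t²))·M_{n−1}`. -/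
theorem macdonaldA1_three_term (n : ℕ) (hn : 1 ≤ n) (x q t : ℂ) (hx0 : x ≠ 0)
    (hq0 : q ≠ 0) (ht0 : t ≠ 0)
    (hqp : ∀ m : ℕ, qPoch (q ^ 2) (q ^ 2) m ≠ 0)
    (htp : ∀ m : ℕ, qPoch (t ^ 2) (q ^ 2) m ≠ 0)
    (hd1 : 1 - q ^ (2 * n - 2) * t ^ 2 ≠ 0)
    (hd2 : 1 - q ^ (2 * n) * t ^ 2 ≠ 0) :
    (x + x⁻¹) * macdonaldA1 n x q t =
      macdonaldA1 (n + 1) x q t +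
        (1 - q ^ (2 * n)) * (1 - q ^ (2 * n - 2) * t ^ 4) /
            ((1 - q ^ (2 * n - 2) * t ^ 2) * (1 - q ^ (2 * n) * t ^ 2)) *
          macdonaldA1 (n - 1) x q t :=
  macdonaldA1_three_term_general n hn x q t hx0 hqp htp
end

section
/- The map σ_R sending T₀ ↦ T₀T₀ᵛT₀⁻¹, T₁ ↦ T₁, T₀ᵛ ↦ T₀, T₁ᵛ ↦ T₁ᵛ extends to an algebra isomorphism from the C∨C₁-type DAHA with parameters (t₀,t₁,t₂,t₃) to the one with parameters (t₂,t₁,t₀,t₃); in particular the images satisfy the defining relations with swapped parameters. -/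
/-- The map `σ_R : T₀ ↦ T₀T₀ᵛT₀⁻¹, T₁ ↦ T₁, T₀ᵛ ↦ T₀, T₁ᵛ ↦ T₁ᵛ` extends to an algebra
isomorphism from the `C∨C₁`-type DAHA with parameters `(t₀,t₁,t₂,t₃)` to the one with
parameters `(t₂,t₁,t₀,t₃)`: the images satisfy the defining relations with swapped parameters. -/
theorem daha_CC1_sigmaR {A : Type*} [Ring A] [Algebra ℂ A]
    (q u t0 t1 t2 t3 : ℂ) (hu : u ^ 2 = q⁻¹)
    (T0 T1 T0v T1v : Aˣ)
    (h0 : ((T0 : A) - algebraMap ℂ A t0⁻¹) * ((T0 : A) + algebraMap ℂ A t0) = 0)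
    (h1 : ((T1 : A) - algebraMap ℂ A t1⁻¹) * ((T1 : A) + algebraMap ℂ A t1) = 0)
    (h2 : ((T0v : A) - algebraMap ℂ A t2⁻¹) * ((T0v : A) + algebraMap ℂ A t2) = 0)
    (h3 : ((T1v : A) - algebraMap ℂ A t3⁻¹) * ((T1v : A) + algebraMap ℂ A t3) = 0)
    (hprod : (T1v : A) * (T1 : A) * (T0 : A) * (T0v : A) = algebraMap ℂ A u) :
    let T0' : Aˣ := T0 * T0v * T0⁻¹
    (((T0' : A) - algebraMap ℂ A t2⁻¹) * ((T0' : A) + algebraMap ℂ A t2) = 0) ∧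
      (((T1 : A) - algebraMap ℂ A t1⁻¹) * ((T1 : A) + algebraMap ℂ A t1) = 0) ∧
      (((T0 : A) - algebraMap ℂ A t0⁻¹) * ((T0 : A) + algebraMap ℂ A t0) = 0) ∧
      (((T1v : A) - algebraMap ℂ A t3⁻¹) * ((T1v : A) + algebraMap ℂ A t3) = 0) ∧
      (T1v : A) * (T1 : A) * (T0' : A) * (T0 : A) = algebraMap ℂ A u := by
  intro T0'
  have key : ∀ c : ℂ, (T0' : A) - algebraMap ℂ A c
      = (T0 : A) * ((T0v : A) - algebraMap ℂ A c) * (T0⁻¹ : Aˣ) := by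
    intro c
    have h : (T0 : A) * algebraMap ℂ A c * (T0⁻¹ : Aˣ) = algebraMap ℂ A c := by
      rw [← Algebra.commutes c (T0 : A), mul_assoc, T0.mul_inv, mul_one]
    simp only [T0', Units.val_mul, mul_sub, sub_mul, h]
  have key2 : ∀ c : ℂ, (T0' : A) + algebraMap ℂ A c
      = (T0 : A) * ((T0v : A) + algebraMap ℂ A c) * (T0⁻¹ : Aˣ) := by
    intro c
    have := key (-c)
    simpa [sub_neg_eq_add] using this
  have conj : ∀ x y : A, ((T0 : A) * x * (T0⁻¹ : Aˣ)) * ((T0 : A) * y * (T0⁻¹ : Aˣ))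
      = (T0 : A) * (x * y) * (T0⁻¹ : Aˣ) := by
    intro x y
    calc ((T0 : A) * x * (T0⁻¹ : Aˣ)) * ((T0 : A) * y * (T0⁻¹ : Aˣ))
        = (T0 : A) * (x * ((((T0⁻¹ : Aˣ) : A) * (T0 : A)) * (y * (T0⁻¹ : Aˣ)))) := by
          simp [mul_assoc]
      _ = (T0 : A) * (x * y) * (T0⁻¹ : Aˣ) := by rw [T0.inv_mul, one_mul]; simp [mul_assoc]
  refine ⟨?_, h1, h0, h3, ?_⟩
  · rw [key, key2, conj, h2, mul_zero, zero_mul]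
  · show (T1v : A) * (T1 : A) * ((T0 * T0v * T0⁻¹ : Aˣ) : A) * (T0 : A) = _
    rw [← hprod]
    simp only [Units.val_mul]
    simp [mul_assoc]
end

section
/- The function G(x, x_u) = exp((log x · log x_u)/log q)·(−q^{1/2} x x_u²; q)_∞ satisfies the two q-difference equations G(qx, x_u)/G(x, x_u) = x_u/(1 + q^{1/2} x x_u²) and G(x, q^{1/2} x_u)/G(x, x_u) = x^{1/2}/(1 + q^{1/2} x x_u²). -/
/-!
Writing `c = q^{1/2} x x_u²`, both substitutions `x ↦ q x` and `x_u ↦ q^{1/2} x_u` turn `c`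
into `q c`, so they strip the first factor `1 + c` off the product `(-c; q)_∞`. On the
exponential prefactor, `log (q x) = log q + log x` multiplies it by `x_u`, and
`log (q^{1/2} x_u) = log q / 2 + log x_u` multiplies it by `x^{1/2}`.
-/

open Real

section InfiniteProduct

variable {q : ℝ}

theorem tprod_one_add_pos {ι : Type*} {f : ι → ℝ} (hf : Summable f) (hf1 : ∀ i, -1 < f i) :
    0 < ∏' i, (1 + f i) := by
  rw [← rexp_tsum_eq_tprod (fun i => by linarith [hf1 i]) (summable_log_one_add_of_summable hf)]
  exact exp_pos _

theorem tprod_one_add_mul_geometric_pos (hq0 : 0 ≤ q) (hq1 : q < 1) {a : ℝ} (ha : 0 ≤ a) :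
    0 < ∏' j : ℕ, (1 + a * q ^ j) :=
  tprod_one_add_pos ((summable_geometric_of_lt_one hq0 hq1).mul_left a)
    fun j => by nlinarith [mul_nonneg ha (pow_nonneg hq0 j)]

theorem tprod_one_add_mul_geometric_eq_mul (hq : |q| < 1) (a : ℝ) :
    ∏' j : ℕ, (1 + a * q ^ j) = (1 + a) * ∏' j : ℕ, (1 + a * q * q ^ j) := by
  have hmul : Multipliable fun j : ℕ => 1 + a * q * q ^ j :=
    Real.multipliable_one_add_of_summable ((summable_geometric_of_abs_lt_one hq).mul_left (a * q))
  rw [tprod_eq_zero_mul' (f := fun j : ℕ => 1 + a * q ^ j) (hmul.congr fun j => by ring),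
    pow_zero, mul_one]
  exact congrArg _ (tprod_congr fun j => by ring)

end InfiniteProduct

section ExponentialPrefactor

variable {q y yu : ℝ}

theorem exp_log_mul_log_div_log_of_mul_left (hq0 : 0 < q) (hq1 : q ≠ 1) (hy : y ≠ 0)
    (hyu : 0 < yu) :
    exp (log (q * y) * log yu / log q) = yu * exp (log y * log yu / log q) := by
  have hlog : log q ≠ 0 := log_ne_zero_of_pos_of_ne_one hq0 hq1
  rw [log_mul hq0.ne' hy, add_mul, add_div, mul_div_cancel_left₀ _ hlog, exp_add,
    exp_log hyu]

theorem exp_log_mul_log_div_log_of_sqrt_mul_right (hq0 : 0 < q) (hq1 : q ≠ 1) (hy : 0 < y)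
    (hyu : yu ≠ 0) :
    exp (log y * log (√q * yu) / log q) = √y * exp (log y * log yu / log q) := by
  have hlog : log q ≠ 0 := log_ne_zero_of_pos_of_ne_one hq0 hq1
  have hsqrt : √y = exp (log y / 2) := by
    rw [← log_sqrt hy.le, exp_log (sqrt_pos.2 hy)]
  rw [hsqrt, ← exp_add, log_mul (sqrt_pos.2 hq0).ne' hyu, log_sqrt hq0.le]
  congr 1
  field_simp

end ExponentialPrefactor

/-- The gluing function `G(x,x_u) = exp((log x · log x_u)/log q)·(−q^{1/2} x x_u²; q)_∞`
(for `0 < q < 1` and positive `x, x_u`) satisfies the two q-difference equations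
`G(qx,x_u)/G(x,x_u) = x_u/(1 + q^{1/2} x x_u²)` and
`G(x,q^{1/2}x_u)/G(x,x_u) = x^{1/2}/(1 + q^{1/2} x x_u²)`. -/
theorem gluing_function_difference_equations (q x xu : ℝ)
    (hq0 : 0 < q) (hq1 : q < 1) (hx : 0 < x) (hxu : 0 < xu) :
    let G : ℝ → ℝ → ℝ := fun y yu =>
      Real.exp (Real.log y * Real.log yu / Real.log q) *
        ∏' j : ℕ, (1 + Real.sqrt q * y * yu ^ 2 * q ^ j)
    G (q * x) xu / G x xu = xu / (1 + Real.sqrt q * x * xu ^ 2) ∧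
      G x (Real.sqrt q * xu) / G x xu = Real.sqrt x / (1 + Real.sqrt q * x * xu ^ 2) := by
  intro G
  set c := √q * x * xu ^ 2
  have hc : 0 < c := by positivity
  have hG : G x xu =
      exp (log x * log xu / log q) * ((1 + c) * ∏' j : ℕ, (1 + c * q * q ^ j)) := by
    rw [← tprod_one_add_mul_geometric_eq_mul (by rwa [abs_of_pos hq0]) c]
  have hG0 : G x xu ≠ 0 :=
    (mul_pos (exp_pos _) (tprod_one_add_mul_geometric_pos hq0.le hq1 hc.le)).ne'
  have h1 : G (q * x) xu = xu / (1 + c) * G x xu := by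
    simp only [hG, G, exp_log_mul_log_div_log_of_mul_left hq0 hq1.ne hx.ne' hxu]
    rw [tprod_congr fun j : ℕ =>
      show 1 + √q * (q * x) * xu ^ 2 * q ^ j = 1 + c * q * q ^ j by ring]
    field_simp
  have h2 : G x (√q * xu) = √x / (1 + c) * G x xu := by
    simp only [hG, G, exp_log_mul_log_div_log_of_sqrt_mul_right hq0 hq1.ne hx hxu.ne']
    rw [tprod_congr fun j : ℕ =>
      show 1 + √q * x * (√q * xu) ^ 2 * q ^ j = 1 + c * q * q ^ j by
        rw [mul_pow, sq_sqrt hq0.le]; ring]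
    field_simp
  exact ⟨by rw [h1, mul_div_cancel_right₀ _ hG0], by rw [h2, mul_div_cancel_right₀ _ hG0]⟩
end
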